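/- arXiv:0805.4551 — 8 statements merged into one kernel-verified Lean document; each statement's English description precedes it below -/
import Mathlib

section
/- Let $P=(p_{ij})$ be an $n\times n$ matrix with nonnegative entries such that $I-P$ is irreducible, $\det(I-P)<0$, and every proper principal submatrix of $I-P$ is a nonsingular M-matrix. Let $\alpha=(\alpha_1,\dots,\alpha_n)^T$ solve $(I-P)\alpha=-\mathbf{1}$. Then $\alpha_i>0$ for all $i$. -/
/-- A square matrix is irreducible if for every nonempty proper subset `S` of
indices there is a nonzero entry `M i j` with `i ∈ S`, `j ∉ S`. -/
def MatIrreducible {n : ℕ} (M : Matrix (Fin n) (Fin n) ℝ) : Prop :=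
  ∀ S : Set (Fin n), S.Nonempty → S ≠ Set.univ → ∃ i ∈ S, ∃ j, j ∉ S ∧ M i j ≠ 0

/-- A nonsingular M-matrix: nonpositive off-diagonal entries and all principal
minors positive (the standard characterization). -/
def IsNonsingularMMatrix {m : Type*} [Fintype m] [DecidableEq m] (M : Matrix m m ℝ) : Prop :=
  (∀ i j, i ≠ j → M i j ≤ 0) ∧
  ∀ T : Finset m, 0 < (M.submatrix (fun i : T => (i : m)) (fun j : T => (j : m))).det

/-!
Write `A = 1 - P`, a Z-matrix. Two classical facts about Z-matrices carry the proof: positive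
principal minors imply semipositivity (some `x > 0` with `A x > 0`), and semipositivity implies
monotonicity (`A z ≥ 0 → z ≥ 0`) and a positive determinant. Both go by induction on the size,
splitting off the first row and column: if `B` is the trailing block, then `u = B⁻¹ (-A_{·0}) ≥ 0`
by monotonicity of `B`, and `v = (1, u) ≥ 0` satisfies `A v = s e₀` where `s` is the Schur
complement, so `det A = s det B` (Cramer's rule).

If now `α_k ≤ 0`, the equations off `k` say that the monotone block obtained by deleting row and
column `k` sends the restriction of `-α` to a vector `≥ 1`. Hence `-α ≥ 0`, and `A (-α) = 1` makes
`A` semipositive, contradicting `det A < 0`.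
-/

theorem exists_pos_add_mul_pos {s : ℝ} (hs : 0 < s) (c : ℝ) : ∃ ε, 0 < ε ∧ 0 < s + ε * c := by
  refine ⟨s / (|c| + 1), by positivity, ?_⟩
  have h : s / (|c| + 1) * |c| < s := by
    rw [div_mul_eq_mul_div, div_lt_iff₀ (by positivity)]
    nlinarith
  nlinarith [neg_abs_le c, div_pos hs (by positivity : (0 : ℝ) < |c| + 1)]

namespace Matrix

variable {ι κ : Type*}

def IsZMatrix (M : Matrix ι ι ℝ) : Prop :=
  ∀ i j, i ≠ j → M i j ≤ 0

def IsSemipositive [Fintype ι] (M : Matrix ι ι ℝ) : Prop :=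
  ∃ x : ι → ℝ, (∀ i, 0 < x i) ∧ ∀ i, 0 < (M *ᵥ x) i

def HasPosPrincipalMinors [Fintype ι] [DecidableEq ι] (M : Matrix ι ι ℝ) : Prop :=
  ∀ (t : ℕ) (g : Fin t → ι), Function.Injective g → 0 < (M.submatrix g g).det

section ZMatrix

variable {M : Matrix ι ι ℝ}

theorem IsZMatrix.submatrix (hM : M.IsZMatrix) {f : κ → ι} (hf : Function.Injective f) :
    (M.submatrix f f).IsZMatrix :=
  fun i j hij => hM (f i) (f j) (hf.ne hij)

theorem IsZMatrix.mulVec_apply_nonpos [Fintype ι] (hM : M.IsZMatrix) {y : ι → ℝ}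
    (hy : ∀ i, 0 ≤ y i) {k : ι} (hk : y k = 0) : (M *ᵥ y) k ≤ 0 := by
  refine Finset.sum_nonpos fun j _ => ?_
  rcases eq_or_ne k j with rfl | hkj
  · simp [hk]
  · exact mul_nonpos_of_nonpos_of_nonneg (hM k j hkj) (hy j)

theorem IsZMatrix.pos_of_nonneg_of_mulVec_pos [Fintype ι] (hM : M.IsZMatrix) {y : ι → ℝ}
    (hy : ∀ i, 0 ≤ y i) (hMy : ∀ i, 0 < (M *ᵥ y) i) (i : ι) : 0 < y i :=
  (hy i).lt_of_ne fun h => (hMy i).not_ge (hM.mulVec_apply_nonpos hy h.symm)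

theorem IsZMatrix.nonneg_of_mulVec_nonneg [Fintype ι] (hM : M.IsZMatrix)
    (hS : M.IsSemipositive) {z : ι → ℝ} (hMz : ∀ i, 0 ≤ (M *ᵥ z) i) (i : ι) : 0 ≤ z i := by
  obtain ⟨x, hx, hMx⟩ := hS
  by_contra! hzi
  -- shift `z` along `x` until its most negative coordinate, relative to `x`, reaches zero
  obtain ⟨k, -, hk⟩ := Finset.exists_max_image Finset.univ (fun i => -z i / x i) ⟨i, by simp⟩
  set t := -z k / x k
  have ht : 0 < t := (div_pos (neg_pos.2 hzi) (hx i)).trans_le (hk i (by simp))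
  have hy : ∀ j, 0 ≤ (z + t • x) j := fun j => by
    have := (div_le_iff₀ (hx j)).1 (hk j (by simp))
    simp only [Pi.add_apply, Pi.smul_apply, smul_eq_mul]
    linarith
  have hyk : (z + t • x) k = 0 := by
    simp [t, div_mul_cancel₀ _ (hx k).ne']
  have := hM.mulVec_apply_nonpos hy hyk
  rw [mulVec_add, mulVec_smul, Pi.add_apply, Pi.smul_apply, smul_eq_mul] at this
  nlinarith [hMz k, mul_pos ht (hMx k)]

theorem IsZMatrix.isUnit_of_isSemipositive [Fintype ι] [DecidableEq ι] (hM : M.IsZMatrix)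
    (hS : M.IsSemipositive) : IsUnit M := by
  refine mulVec_injective_iff_isUnit.1 fun z w hzw => funext fun i => le_antisymm ?_ ?_
  · have := hM.nonneg_of_mulVec_nonneg hS (z := w - z) (by simp [mulVec_sub, hzw]) i
    simpa [sub_nonneg] using this
  · have := hM.nonneg_of_mulVec_nonneg hS (z := z - w) (by simp [mulVec_sub, hzw]) i
    simpa [sub_nonneg] using this

end ZMatrix

theorem mulVec_apply_succ {n : ℕ} (M : Matrix (Fin (n + 1)) (Fin (n + 1)) ℝ)
    (x : Fin (n + 1) → ℝ) (i : Fin n) :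
    (M *ᵥ x) i.succ = M i.succ 0 * x 0 + (M.submatrix Fin.succ Fin.succ *ᵥ (x ∘ Fin.succ)) i :=
  Fin.sum_univ_succ _

theorem det_mul_apply_eq_of_mulVec_eq_single {R : Type*} [CommRing R] [Fintype ι]
    [DecidableEq ι] {M : Matrix ι ι R} {v : ι → R} {k : ι} {s : R}
    (h : M *ᵥ v = Pi.single k s) : M.det * v k = s * M.adjugate k k := by
  have := congrFun (congrArg (M.adjugate *ᵥ ·) h) k
  simp only [mulVec_mulVec, adjugate_mul, smul_mulVec, one_mulVec, mulVec_single] at this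
  simpa [mul_comm] using this

theorem HasPosPrincipalMinors.submatrix [Fintype ι] [DecidableEq ι] [Fintype κ] [DecidableEq κ]
    {M : Matrix ι ι ℝ} (h : M.HasPosPrincipalMinors) {f : κ → ι} (hf : Function.Injective f) :
    (M.submatrix f f).HasPosPrincipalMinors :=
  fun t g hg => h t (f ∘ g) (hf.comp hg)

theorem HasPosPrincipalMinors.det_pos [Fintype ι] [DecidableEq ι] {M : Matrix ι ι ℝ}
    (h : M.HasPosPrincipalMinors) : 0 < M.det := by
  let e := (Fintype.equivFin ι).symm
  simpa [det_submatrix_equiv_self] using h _ e e.injective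

theorem IsSemipositive.submatrix_equiv [Fintype ι] [Fintype κ] {M : Matrix ι ι ℝ}
    (h : M.IsSemipositive) (e : κ ≃ ι) : (M.submatrix e e).IsSemipositive := by
  obtain ⟨x, hx, hMx⟩ := h
  exact ⟨x ∘ e, fun i => hx (e i), fun i => by
    simpa only [submatrix_mulVec_equiv, Function.comp_assoc, Equiv.self_comp_symm,
      Function.comp_id, Function.comp_apply] using hMx (e i)⟩

section Fin

variable {n : ℕ} {M : Matrix (Fin (n + 1)) (Fin (n + 1)) ℝ}

theorem IsZMatrix.isSemipositive_submatrix_succ (hM : M.IsZMatrix) (hS : M.IsSemipositive) :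
    (M.submatrix Fin.succ Fin.succ).IsSemipositive := by
  obtain ⟨x, hx, hMx⟩ := hS
  refine ⟨x ∘ Fin.succ, fun i => hx _, fun i => ?_⟩
  have := mul_nonpos_of_nonpos_of_nonneg (hM i.succ 0 (Fin.succ_ne_zero i)) (hx 0).le
  linarith [mulVec_apply_succ M x i, hMx i.succ]

theorem IsZMatrix.exists_mulVec_eq_single (hM : M.IsZMatrix)
    (hS : (M.submatrix Fin.succ Fin.succ).IsSemipositive) :
    ∃ (v : Fin (n + 1) → ℝ) (s : ℝ), v 0 = 1 ∧ (∀ i, 0 ≤ v i) ∧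
      M *ᵥ v = Pi.single 0 s ∧ M.det = s * (M.submatrix Fin.succ Fin.succ).det := by
  set B := M.submatrix Fin.succ Fin.succ
  have hB : B.IsZMatrix := hM.submatrix (Fin.succ_injective n)
  set u := B⁻¹ *ᵥ fun j => -M j.succ 0
  have hBu : B *ᵥ u = fun j => -M j.succ 0 := by
    simp only [u, mulVec_mulVec, mul_nonsing_inv _ ((isUnit_iff_isUnit_det B).1
      (hB.isUnit_of_isSemipositive hS)), one_mulVec]
  have hu : ∀ j, 0 ≤ u j := hB.nonneg_of_mulVec_nonneg hS fun j => by
    rw [hBu]; exact neg_nonneg.2 (hM _ _ (Fin.succ_ne_zero j))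
  set v : Fin (n + 1) → ℝ := Fin.cons 1 u
  have hMv : M *ᵥ v = Pi.single 0 ((M *ᵥ v) 0) := by
    ext i
    refine Fin.cases (by simp) (fun j => ?_) i
    rw [mulVec_apply_succ, Pi.single_eq_of_ne (Fin.succ_ne_zero j),
      show v ∘ Fin.succ = u from rfl, hBu, show v 0 = 1 from rfl]
    ring
  refine ⟨v, (M *ᵥ v) 0, rfl, Fin.cases zero_le_one hu, hMv, ?_⟩
  have := det_mul_apply_eq_of_mulVec_eq_single hMv
  simpa [v, adjugate_fin_succ_eq_det_submatrix] using this

theorem IsZMatrix.det_pos_of_isSemipositive_fin :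
    ∀ {n : ℕ} {M : Matrix (Fin n) (Fin n) ℝ}, M.IsZMatrix → M.IsSemipositive → 0 < M.det
  | 0, _, _, _ => by simp
  | n + 1, M, hM, hS => by
    have hB := hM.isSemipositive_submatrix_succ hS
    obtain ⟨v, s, hv0, -, hMv, hdet⟩ := hM.exists_mulVec_eq_single hB
    have hs : 0 < s := by
      by_contra! hs
      have := hM.nonneg_of_mulVec_nonneg hS (z := -v) (fun i => by
        rcases eq_or_ne i 0 with rfl | hi
        · simpa [mulVec_neg, hMv] using hs
        · simp [mulVec_neg, hMv, hi]) 0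
      norm_num [hv0] at this
    rw [hdet]
    exact mul_pos hs (det_pos_of_isSemipositive_fin (hM.submatrix (Fin.succ_injective n)) hB)

theorem isSemipositive_of_mulVec_eq_single (hS : (M.submatrix Fin.succ Fin.succ).IsSemipositive)
    {v : Fin (n + 1) → ℝ} {s : ℝ} (hv : ∀ i, 0 ≤ v i) (hv0 : 0 < v 0)
    (hMv : M *ᵥ v = Pi.single 0 s) (hs : 0 < s) : M.IsSemipositive := by
  obtain ⟨x, hx, hBx⟩ := hS
  set w : Fin (n + 1) → ℝ := Fin.cons 0 x
  obtain ⟨ε, hε, hsε⟩ := exists_pos_add_mul_pos hs ((M *ᵥ w) 0)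
  refine ⟨v + ε • w, Fin.cases ?_ fun i => ?_, Fin.cases ?_ fun i => ?_⟩
  · simpa [w] using hv0
  · simpa [w] using add_pos_of_nonneg_of_pos (hv i.succ) (mul_pos hε (hx i))
  · simpa [mulVec_add, mulVec_smul, hMv] using hsε
  · have hw : (M *ᵥ w) i.succ = (M.submatrix Fin.succ Fin.succ *ᵥ x) i := by
      simp [mulVec_apply_succ, w]
    simpa [mulVec_add, mulVec_smul, hMv, Pi.single_eq_of_ne (Fin.succ_ne_zero i), hw]
      using mul_pos hε (hBx i)

theorem IsZMatrix.isSemipositive_of_hasPosPrincipalMinors_fin :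
    ∀ {n : ℕ} {M : Matrix (Fin n) (Fin n) ℝ}, M.IsZMatrix → M.HasPosPrincipalMinors →
      M.IsSemipositive
  | 0, _, _, _ => ⟨0, finZeroElim, finZeroElim⟩
  | n + 1, M, hM, h => by
    have hB := isSemipositive_of_hasPosPrincipalMinors_fin (hM.submatrix (Fin.succ_injective n))
      (h.submatrix (Fin.succ_injective n))
    obtain ⟨v, s, hv0, hv, hMv, hdet⟩ := hM.exists_mulVec_eq_single hB
    have hs : 0 < s := pos_of_mul_pos_left (hdet ▸ h.det_pos)
      (h.submatrix (Fin.succ_injective n)).det_pos.le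
    exact isSemipositive_of_mulVec_eq_single hB hv (by simp [hv0]) hMv hs

end Fin

section General

variable [Fintype ι] [DecidableEq ι] {M : Matrix ι ι ℝ}

theorem IsZMatrix.det_pos_of_isSemipositive (hM : M.IsZMatrix) (hS : M.IsSemipositive) :
    0 < M.det := by
  let e := (Fintype.equivFin ι).symm
  simpa [det_submatrix_equiv_self] using
    det_pos_of_isSemipositive_fin (hM.submatrix e.injective) (hS.submatrix_equiv e)

theorem IsZMatrix.isSemipositive_of_hasPosPrincipalMinors (hM : M.IsZMatrix)
    (h : M.HasPosPrincipalMinors) : M.IsSemipositive := by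
  let e := (Fintype.equivFin ι).symm
  simpa using (isSemipositive_of_hasPosPrincipalMinors_fin (hM.submatrix e.injective)
    (h.submatrix e.injective)).submatrix_equiv e.symm

theorem mulVec_submatrix_erase_apply (M : Matrix ι ι ℝ) (k : ι) (x : ι → ℝ)
    (j : Finset.univ.erase k) :
    (M.submatrix (fun i : Finset.univ.erase k => (i : ι)) (fun i : Finset.univ.erase k => (i : ι))
      *ᵥ fun i : Finset.univ.erase k => x i) j = (M *ᵥ x) j - M j k * x k :=
  (Finset.sum_coe_sort _ (fun i => M j i * x i)).trans
    (Finset.sum_erase_eq_sub (Finset.mem_univ k))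

theorem IsZMatrix.pos_of_mulVec_eq_neg_one (hM : M.IsZMatrix) (hdet : M.det ≤ 0) {k : ι}
    (hS : (M.submatrix (fun i : Finset.univ.erase k => (i : ι))
      (fun i : Finset.univ.erase k => (i : ι))).IsSemipositive)
    {α : ι → ℝ} (hα : M *ᵥ α = fun _ => -1) : 0 < α k := by
  by_contra! hk
  have hMα : ∀ i, (M *ᵥ -α) i = 1 := by simp [mulVec_neg, hα]
  have hα' : ∀ i, 0 ≤ (-α) i := fun i => by
    rcases eq_or_ne i k with rfl | hik
    · simpa using hk
    refine (hM.submatrix Subtype.val_injective).nonneg_of_mulVec_nonneg hS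
      (z := fun j => (-α) j) (fun j => ?_)
      ⟨i, Finset.mem_erase.2 ⟨hik, Finset.mem_univ i⟩⟩
    rw [mulVec_submatrix_erase_apply, hMα]
    have := mul_nonpos_of_nonpos_of_nonneg (hM j k (Finset.mem_erase.1 j.2).1) (neg_nonneg.2 hk)
    simp only [Pi.neg_apply]
    linarith
  have hMα_pos : ∀ i, 0 < (M *ᵥ -α) i := fun i => by rw [hMα]; exact one_pos
  exact hdet.not_gt (hM.det_pos_of_isSemipositive
    ⟨-α, hM.pos_of_nonneg_of_mulVec_pos hα' hMα_pos, hMα_pos⟩)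

end General

end Matrix

open Matrix in
theorem IsNonsingularMMatrix.hasPosPrincipalMinors {m : Type*} [Fintype m] [DecidableEq m]
    {M : Matrix m m ℝ} (hM : IsNonsingularMMatrix M) : M.HasPosPrincipalMinors := by
  intro t g hg
  let e : Fin t ≃ Finset.univ.image g :=
    (Equiv.ofInjective g hg).trans (Equiv.subtypeEquivRight fun x => by simp)
  have := hM.2 (Finset.univ.image g)
  rwa [← det_submatrix_equiv_self e] at this

theorem stmt0_general (n : ℕ) (P : Matrix (Fin n) (Fin n) ℝ)
    (hP : ∀ i j, 0 ≤ P i j)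
    (hdet : ((1 : Matrix (Fin n) (Fin n) ℝ) - P).det < 0)
    (hM : ∀ S : Finset (Fin n), S ≠ Finset.univ →
      IsNonsingularMMatrix
        (((1 : Matrix (Fin n) (Fin n) ℝ) - P).submatrix
          (fun i : S => (i : Fin n)) (fun j : S => (j : Fin n))))
    (α : Fin n → ℝ)
    (hα : ((1 : Matrix (Fin n) (Fin n) ℝ) - P).mulVec α = fun _ => -1) :
    ∀ i, 0 < α i := by
  have hZ : Matrix.IsZMatrix ((1 : Matrix (Fin n) (Fin n) ℝ) - P) := fun i j hij => by
    simp [Matrix.one_apply_ne hij, hP i j]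
  intro k
  have hB := hM (Finset.univ.erase k) (Finset.erase_ne_self.2 (Finset.mem_univ k))
  exact hZ.pos_of_mulVec_eq_neg_one hdet.le
    ((hZ.submatrix Subtype.val_injective).isSemipositive_of_hasPosPrincipalMinors
      hB.hasPosPrincipalMinors) hα

/-- under the structure assumptions on `P`, the solution `α` of
`(I - P) α = -𝟙` has all entries positive. -/
theorem stmt0 (n : ℕ) (hn : 1 ≤ n) (P : Matrix (Fin n) (Fin n) ℝ)
    (hP : ∀ i j, 0 ≤ P i j)
    (hirr : MatIrreducible (1 - P))
    (hdet : ((1 : Matrix (Fin n) (Fin n) ℝ) - P).det < 0)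
    (hM : ∀ S : Finset (Fin n), S ≠ Finset.univ →
      IsNonsingularMMatrix
        (((1 : Matrix (Fin n) (Fin n) ℝ) - P).submatrix
          (fun i : S => (i : Fin n)) (fun j : S => (j : Fin n))))
    (α : Fin n → ℝ)
    (hα : ((1 : Matrix (Fin n) (Fin n) ℝ) - P).mulVec α = fun _ => -1) :
    ∀ i, 0 < α i :=
  stmt0_general n P hP hdet hM α hα
end

section
/- Let $P=(p_{ij})$ be an $n\times n$ matrix with nonnegative entries such that every cofactor $A_{i1}$ of $I-P$ (the algebraic minor of rank $n-1$ at position $(i,1)$) is positive. If $\sum_{j=1}^n p_{1j}\le \sum_{j=1}^n p_{ij}$ for all $i$, then $-\det(I-P)\ge (\sum_{j=1}^n p_{1j}-1)\Lambda^1$, where $\Lambda^1$ is the determinant of the matrix obtained from $I-P$ by replacing its first column with the all-ones vector. Equality holds if and only if all row sums $\sum_{j=1}^n p_{ij}$ are equal. -/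
/-!
Expanding along the first column, `Λ¹ = ∑ᵢ Aᵢ₁`. Adding all other columns of `I - P` to the
first one does not change its determinant and turns that column into `(1 - sᵢ)ᵢ`, where `sᵢ` is
the `i`-th row sum of `P`; hence `-det(I - P) = ∑ᵢ (sᵢ - 1) Aᵢ₁`. Since every `Aᵢ₁ > 0` and
`s₁` is the least row sum, comparing the two sums term by term gives the inequality, with
equality exactly when every `sᵢ = s₁`.
-/

/-- The cofactor `A_{i1}` of a square matrix `M` (with zero-based indexing:
`(-1)^i` times the determinant of `M` with row `i` and column `0` deleted). -/
noncomputable def cofCol0 {n : ℕ} (M : Matrix (Fin (n + 1)) (Fin (n + 1)) ℝ)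
    (i : Fin (n + 1)) : ℝ :=
  (-1 : ℝ) ^ (i : ℕ) * (M.submatrix i.succAbove (Fin.succAbove 0)).det

open Finset Matrix

lemma det_updateCol_zero_eq_sum_mul_cofCol0 {n : ℕ} (M : Matrix (Fin (n + 1)) (Fin (n + 1)) ℝ)
    (c : Fin (n + 1) → ℝ) :
    (M.updateCol 0 c).det = ∑ i, c i * cofCol0 M i := by
  rw [det_succ_column_zero]
  refine sum_congr rfl fun i _ => ?_
  have h_minor : (M.updateCol 0 c).submatrix i.succAbove Fin.succ =
      M.submatrix i.succAbove Fin.succ := by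
    ext k l
    simp
  rw [updateCol_self, h_minor, cofCol0, Fin.succAbove_zero]
  ring

lemma det_eq_sum_rowSum_mul_cofCol0 {n : ℕ} (M : Matrix (Fin (n + 1)) (Fin (n + 1)) ℝ) :
    M.det = ∑ i, (∑ j, M i j) * cofCol0 M i := by
  have h_addCols : (M.updateCol 0 fun i => ∑ j, M i j).det = M.det := by
    simpa using det_updateCol_sum M 0 fun _ => 1
  rw [← h_addCols, det_updateCol_zero_eq_sum_mul_cofCol0]

lemma neg_det_one_sub_eq_sum {n : ℕ} (P : Matrix (Fin (n + 1)) (Fin (n + 1)) ℝ) :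
    -(1 - P).det = ∑ i, (∑ j, P i j - 1) * cofCol0 (1 - P) i := by
  rw [det_eq_sum_rowSum_mul_cofCol0, ← sum_neg_distrib]
  refine sum_congr rfl fun i _ => ?_
  simp only [Matrix.sub_apply, sum_sub_distrib, one_apply, sum_ite_eq, mem_univ, if_true]
  ring

lemma sum_mul_le_sum_mul_of_min {ι : Type*} [Fintype ι] (s w : ι → ℝ) (a : ι)
    (hw : ∀ i, 0 < w i) (hmin : ∀ i, s a ≤ s i) :
    ∑ i, s a * w i ≤ ∑ i, s i * w i ∧
      (∑ i, s a * w i = ∑ i, s i * w i ↔ ∀ i i', s i = s i') := by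
  have hle : ∀ i ∈ univ, s a * w i ≤ s i * w i := fun i _ =>
    mul_le_mul_of_nonneg_right (hmin i) (hw i).le
  refine ⟨sum_le_sum hle, ?_⟩
  rw [sum_eq_sum_iff_of_le hle]
  constructor
  · intro h i i'
    have h_eq_min : ∀ k, s k = s a := fun k =>
      (mul_right_cancel₀ (hw k).ne' (h k (mem_univ k))).symm
    rw [h_eq_min i, h_eq_min i']
  · intro h i _
    rw [h a i]

theorem stmt2_general (n : ℕ) (P : Matrix (Fin (n + 1)) (Fin (n + 1)) ℝ)
    (hcof : ∀ i, 0 < cofCol0 ((1 : Matrix (Fin (n + 1)) (Fin (n + 1)) ℝ) - P) i)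
    (hmin : ∀ i, ∑ j, P 0 j ≤ ∑ j, P i j) :
    (∑ j, P 0 j - 1) *
        (((1 : Matrix (Fin (n + 1)) (Fin (n + 1)) ℝ) - P).updateCol 0
          (fun _ => 1)).det ≤
      -((1 : Matrix (Fin (n + 1)) (Fin (n + 1)) ℝ) - P).det ∧
    ((∑ j, P 0 j - 1) *
        (((1 : Matrix (Fin (n + 1)) (Fin (n + 1)) ℝ) - P).updateCol 0
          (fun _ => 1)).det =
      -((1 : Matrix (Fin (n + 1)) (Fin (n + 1)) ℝ) - P).det ↔
      ∀ i i', ∑ j, P i j = ∑ j, P i' j) := by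
  have hΛ : (∑ j, P 0 j - 1) * ((1 - P).updateCol 0 fun _ => 1).det =
      ∑ i, (∑ j, P 0 j - 1) * cofCol0 (1 - P) i := by
    rw [det_updateCol_zero_eq_sum_mul_cofCol0, mul_sum]
    simp only [one_mul]
  rw [hΛ, neg_det_one_sub_eq_sum]
  simpa only [sub_left_inj] using
    sum_mul_le_sum_mul_of_min (fun i => ∑ j, P i j - 1) _ 0 hcof fun i => by simp [hmin i]

/-- if all cofactors of `I - P` along the first column are positive
and the first row sum of `P` is minimal, then
`(∑_j p_{1j} - 1) Λ¹ ≤ -det(I-P)`, with equality iff all row sums are equal.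
Here `Λ¹` is the determinant of `I - P` with its first column replaced by the
all-ones vector. -/
theorem stmt2 (n : ℕ) (P : Matrix (Fin (n + 1)) (Fin (n + 1)) ℝ)
    (hP : ∀ i j, 0 ≤ P i j)
    (hcof : ∀ i, 0 < cofCol0 ((1 : Matrix (Fin (n + 1)) (Fin (n + 1)) ℝ) - P) i)
    (hmin : ∀ i, ∑ j, P 0 j ≤ ∑ j, P i j) :
    (∑ j, P 0 j - 1) *
        (((1 : Matrix (Fin (n + 1)) (Fin (n + 1)) ℝ) - P).updateCol 0
          (fun _ => 1)).det ≤
      -((1 : Matrix (Fin (n + 1)) (Fin (n + 1)) ℝ) - P).det ∧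
    ((∑ j, P 0 j - 1) *
        (((1 : Matrix (Fin (n + 1)) (Fin (n + 1)) ℝ) - P).updateCol 0
          (fun _ => 1)).det =
      -((1 : Matrix (Fin (n + 1)) (Fin (n + 1)) ℝ) - P).det ↔
      ∀ i i', ∑ j, P i j = ∑ j, P i' j) :=
  stmt2_general n P hcof hmin
end

section
/- Let $P=(p_{ij})$ be an $n\times n$ matrix with nonnegative entries, $\det(I-P)<0$, all cofactors of $I-P$ along the first column positive, and $\Lambda^j>0$ for all $j$, where $\Lambda^j$ is the determinant of $I-P$ with its $j$-th column replaced by the all-ones vector. Suppose the first row sum $\sum_{j=1}^n p_{1j}$ is minimal among all row sums and some other row has strictly larger row sum. Then $\Lambda^1$ is not the maximum of $\{\Lambda^1,\dots,\Lambda^n\}$. -/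
/-- `Λ^j`: the determinant of `M` with column `j` replaced by the all-ones vector. -/
noncomputable def Lam {n : ℕ} (M : Matrix (Fin (n + 1)) (Fin (n + 1)) ℝ)
    (j : Fin (n + 1)) : ℝ :=
  (M.updateCol j fun _ => 1).det

open Matrix

lemma dotProduct_neg_of_pos_of_nonpos {ι : Type*} [Fintype ι] {c w : ι → ℝ}
    (hc : ∀ i, 0 < c i) (hw : ∀ i, w i ≤ 0) (hneg : ∃ i, w i < 0) : c ⬝ᵥ w < 0 :=
  Finset.sum_neg' (fun i _ => mul_nonpos_of_nonneg_of_nonpos (hc i).le (hw i))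
    (hneg.imp fun i hi => ⟨Finset.mem_univ i, mul_neg_of_pos_of_neg (hc i) hi⟩)

section Cramer

variable {n : ℕ} (M : Matrix (Fin (n + 1)) (Fin (n + 1)) ℝ)

lemma cofCol0_eq_det_updateRow (i : Fin (n + 1)) :
    cofCol0 M i = (M.updateRow i (Pi.single 0 1)).det := by
  rw [det_succ_row _ i, Finset.sum_eq_single (0 : Fin (n + 1))]
  · simp [cofCol0]
  · intro j _ hj
    simp [hj]
  · simp

lemma cofCol0_eq_cramer_transpose : cofCol0 M = cramer Mᵀ (Pi.single 0 1) := by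
  ext i
  rw [cramer_transpose_apply, cofCol0_eq_det_updateRow]

lemma vecMul_cofCol0 : cofCol0 M ᵥ* M = M.det • Pi.single 0 1 := by
  rw [← mulVec_transpose, cofCol0_eq_cramer_transpose, mulVec_cramer, det_transpose]

lemma mulVec_Lam : M *ᵥ Lam M = M.det • 1 :=
  mulVec_cramer M 1

theorem exists_Lam_zero_lt_Lam (hrow₀ : ∀ j, j ≠ 0 → M 0 j ≤ 0)
    (hcof : ∀ i, 0 < cofCol0 M i) (hLam₀ : 0 < Lam M 0)
    (hmax : ∀ i, ∑ j, M i j ≤ ∑ j, M 0 j) (hstrict : ∃ i, ∑ j, M i j < ∑ j, M 0 j) :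
    ∃ j, Lam M 0 < Lam M j := by
  by_contra! hLmax
  set d : Fin (n + 1) → ℝ := fun j => Lam M 0 - Lam M j with hd
  have hMd : ∀ i, (M *ᵥ d) i = (∑ j, M i j) * Lam M 0 - M.det := by
    intro i
    have hLi : (M *ᵥ Lam M) i = M.det := by simp [mulVec_Lam]
    rw [← hLi]
    simp only [mulVec, dotProduct, hd, mul_sub, Finset.sum_sub_distrib, Finset.sum_mul]
  have hMd₀ : (M *ᵥ d) 0 ≤ 0 := by
    show ∑ j, M 0 j * d j ≤ 0
    refine Finset.sum_nonpos fun j _ => ?_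
    rcases eq_or_ne j 0 with rfl | hj
    · simp [hd]
    · exact mul_nonpos_of_nonpos_of_nonneg (hrow₀ j hj) (sub_nonneg.mpr (hLmax j))
  have hMd_le : ∀ i, (M *ᵥ d) i ≤ 0 := fun i => by
    have := mul_le_mul_of_nonneg_right (hmax i) hLam₀.le
    linarith [hMd i, hMd 0]
  have hMd_neg : ∃ i, (M *ᵥ d) i < 0 := hstrict.imp fun i hi => by
    have := mul_lt_mul_of_pos_right hi hLam₀
    linarith [hMd i, hMd 0]
  have hzero : cofCol0 M ⬝ᵥ (M *ᵥ d) = 0 := by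
    rw [dotProduct_mulVec, vecMul_cofCol0, smul_dotProduct, single_dotProduct]
    simp [hd]
  exact (dotProduct_neg_of_pos_of_nonpos hcof hMd_le hMd_neg).ne hzero

end Cramer

theorem stmt3_general (n : ℕ) (P : Matrix (Fin (n + 1)) (Fin (n + 1)) ℝ)
    (hP : ∀ i j, 0 ≤ P i j)
    (hcof : ∀ i, 0 < cofCol0 ((1 : Matrix (Fin (n + 1)) (Fin (n + 1)) ℝ) - P) i)
    (hLam : ∀ j, 0 < Lam ((1 : Matrix (Fin (n + 1)) (Fin (n + 1)) ℝ) - P) j)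
    (hmin : ∀ i, ∑ j, P 0 j ≤ ∑ j, P i j)
    (hstrict : ∃ i, ∑ j, P 0 j < ∑ j, P i j) :
    ∃ j, Lam ((1 : Matrix (Fin (n + 1)) (Fin (n + 1)) ℝ) - P) 0 <
      Lam ((1 : Matrix (Fin (n + 1)) (Fin (n + 1)) ℝ) - P) j := by
  have hrowSum : ∀ i, ∑ j, (1 - P) i j = 1 - ∑ j, P i j := fun i => by
    simp [Matrix.sub_apply, Finset.sum_sub_distrib, one_apply]
  refine exists_Lam_zero_lt_Lam _ (fun j hj => ?_) hcof (hLam 0) (fun i => ?_)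
    (hstrict.imp fun i hi => ?_)
  · simpa [Matrix.sub_apply, one_apply, hj.symm] using hP 0 j
  · rw [hrowSum, hrowSum]; linarith [hmin i]
  · rw [hrowSum, hrowSum]; linarith

/-- if the first row sum of `P` is minimal and some other row sum is
strictly larger, then `Λ¹` is not the maximum of the `Λ^j`. -/
theorem stmt3 (n : ℕ) (P : Matrix (Fin (n + 1)) (Fin (n + 1)) ℝ)
    (hP : ∀ i j, 0 ≤ P i j)
    (hdet : ((1 : Matrix (Fin (n + 1)) (Fin (n + 1)) ℝ) - P).det < 0)
    (hcof : ∀ i, 0 < cofCol0 ((1 : Matrix (Fin (n + 1)) (Fin (n + 1)) ℝ) - P) i)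
    (hLam : ∀ j, 0 < Lam ((1 : Matrix (Fin (n + 1)) (Fin (n + 1)) ℝ) - P) j)
    (hmin : ∀ i, ∑ j, P 0 j ≤ ∑ j, P i j)
    (hstrict : ∃ i, ∑ j, P 0 j < ∑ j, P i j) :
    ∃ j, Lam ((1 : Matrix (Fin (n + 1)) (Fin (n + 1)) ℝ) - P) 0 <
      Lam ((1 : Matrix (Fin (n + 1)) (Fin (n + 1)) ℝ) - P) j :=
  stmt3_general n P hP hcof hLam hmin hstrict
end

section
/- Let $P=(p_{ij})$ be an $n\times n$ matrix with nonnegative entries and $\det(I-P)<0$, and suppose all cofactors $A_{ij}$ of $I-P$ are positive. Let $p_c>1$ and suppose $\max_j \alpha_j > 1/(p_c-1)$ where $(I-P)\alpha=-\mathbf 1$. If the first row sum $\sum_{j=1}^n p_{1j}$ is minimal among all row sums, then $\sum_{j=1}^n p_{1j} < p_c$. -/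
/-- The cofactor `A_{ij}` of a square matrix `M` (zero-based indexing:
`(-1)^(i+j)` times the determinant of `M` with row `i` and column `j` deleted). -/
noncomputable def cofactor {n : ℕ} (M : Matrix (Fin (n + 1)) (Fin (n + 1)) ℝ)
    (i j : Fin (n + 1)) : ℝ :=
  (-1 : ℝ) ^ ((i : ℕ) + (j : ℕ)) * (M.submatrix i.succAbove j.succAbove).det

/-!
Write `M = I - P`, `s = ∑ⱼ p₁ⱼ` and suppose `s ≥ p_c`. Since `adj M · M = det M · I`, the `j`-th
entry of `adj M` applied to `M α = -𝟙` gives `det M · αⱼ = -Cⱼ`, where `Cⱼ > 0` is the `j`-th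
column sum of cofactors, and applied to `M 𝟙` (the row sums `1 - ∑ₖ pᵢₖ ≤ 1 - s` of `M`) gives
`det M ≤ (1 - s) Cⱼ`. Together, `(s - 1) αⱼ ≤ 1` for every `j`, which contradicts
`αⱼ > 1/(p_c - 1) ≥ 1/(s - 1)`.
-/

lemma adjugate_eq_cofactor {n : ℕ} (M : Matrix (Fin (n + 1)) (Fin (n + 1)) ℝ)
    (i j : Fin (n + 1)) : M.adjugate j i = cofactor M i j := by
  rw [Matrix.adjugate_fin_succ_eq_det_submatrix, cofactor]

namespace Matrix

variable {ι : Type*} [Fintype ι] [DecidableEq ι]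

lemma det_mul_apply_eq_sum_adjugate_mul {R : Type*} [CommRing R] (M : Matrix ι ι R)
    (v : ι → R) (j : ι) : M.det * v j = ∑ k, M.adjugate j k * (M *ᵥ v) k := by
  have h : M.adjugate *ᵥ (M *ᵥ v) = M.det • v := by
    rw [mulVec_mulVec, adjugate_mul, smul_mulVec, one_mulVec]
  simpa [mulVec, dotProduct] using (congrFun h j).symm

lemma sub_one_mul_le_one_of_mulVec_eq_neg_one {K : Type*} [Field K] [LinearOrder K]
    [IsStrictOrderedRing K] {M : Matrix ι ι K} {α : ι → K} {s : K} {j : ι}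
    (hdet : M.det < 0) (hadj : ∀ k, 0 ≤ M.adjugate j k)
    (hα : M *ᵥ α = fun _ => -1) (hrow : ∀ k, (M *ᵥ 1) k ≤ 1 - s) :
    (s - 1) * α j ≤ 1 := by
  set C := ∑ k, M.adjugate j k
  have hCramer : M.det * α j = -C := by
    simp [det_mul_apply_eq_sum_adjugate_mul M α j, hα, C]
  have hrowsum : M.det ≤ (1 - s) * C :=
    calc M.det = ∑ k, M.adjugate j k * (M *ᵥ 1) k := by
          simpa using det_mul_apply_eq_sum_adjugate_mul M 1 j
      _ ≤ ∑ k, M.adjugate j k * (1 - s) :=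
          Finset.sum_le_sum fun k _ => mul_le_mul_of_nonneg_left (hrow k) (hadj k)
      _ = (1 - s) * C := by rw [← Finset.sum_mul, mul_comm]
  have : M.det * 1 ≤ M.det * ((s - 1) * α j) :=
    calc M.det * 1 ≤ (1 - s) * C := by rwa [mul_one]
      _ = M.det * ((s - 1) * α j) := by linear_combination (1 - s) * hCramer
  exact (mul_le_mul_left_of_neg hdet).mp this

end Matrix

theorem stmt4_general (n : ℕ) (P : Matrix (Fin (n + 1)) (Fin (n + 1)) ℝ)
    (hdet : ((1 : Matrix (Fin (n + 1)) (Fin (n + 1)) ℝ) - P).det < 0)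
    (hcof : ∀ i j, 0 < cofactor ((1 : Matrix (Fin (n + 1)) (Fin (n + 1)) ℝ) - P) i j)
    (pc : ℝ) (hpc : 1 < pc)
    (α : Fin (n + 1) → ℝ)
    (hα : ((1 : Matrix (Fin (n + 1)) (Fin (n + 1)) ℝ) - P).mulVec α = fun _ => -1)
    (hmax : ∃ j, 1 / (pc - 1) < α j)
    (hmin : ∀ i, ∑ j, P 0 j ≤ ∑ j, P i j) :
    ∑ j, P 0 j < pc := by
  obtain ⟨j, hj⟩ := hmax
  by_contra! hs
  have hrow : ∀ k, (1 - P).mulVec 1 k ≤ 1 - ∑ j, P 0 j := fun k => by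
    simp only [Matrix.sub_mulVec, Matrix.one_mulVec, Pi.sub_apply, Pi.one_apply]
    simp only [Matrix.mulVec, dotProduct, Pi.one_apply, mul_one]
    linarith [hmin k]
  have key := Matrix.sub_one_mul_le_one_of_mulVec_eq_neg_one hdet
    (fun k => by rw [adjugate_eq_cofactor]; exact (hcof k j).le) hα hrow
  have hαj : 1 < (pc - 1) * α j := by rwa [div_lt_iff₀' (by linarith)] at hj
  nlinarith

/-- under positivity of all cofactors of `I - P`, negativity of
`det(I - P)` and `max_j α_j > 1/(p_c - 1)`, a minimal row sum of `P` is
strictly below the critical exponent `p_c`. -/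
theorem stmt4 (n : ℕ) (P : Matrix (Fin (n + 1)) (Fin (n + 1)) ℝ)
    (hP : ∀ i j, 0 ≤ P i j)
    (hdet : ((1 : Matrix (Fin (n + 1)) (Fin (n + 1)) ℝ) - P).det < 0)
    (hcof : ∀ i j, 0 < cofactor ((1 : Matrix (Fin (n + 1)) (Fin (n + 1)) ℝ) - P) i j)
    (pc : ℝ) (hpc : 1 < pc)
    (α : Fin (n + 1) → ℝ)
    (hα : ((1 : Matrix (Fin (n + 1)) (Fin (n + 1)) ℝ) - P).mulVec α = fun _ => -1)
    (hmax : ∃ j, 1 / (pc - 1) < α j)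
    (hmin : ∀ i, ∑ j, P 0 j ≤ ∑ j, P i j) :
    ∑ j, P 0 j < pc :=
  stmt4_general n P hdet hcof pc hpc α hα hmax hmin
end

section
/- Let $d\ge 3$, let $B_1\subset\mathbb{R}^d$ be the open unit ball, and let $P=(p_{ij})$ be an $n\times n$ nonnegative matrix with $(I-P)\alpha=-\mathbf 1$ having solution $\alpha$ with $0<\alpha_i<(d-2)/2$ for all $i$. Define $c_i>0$ by $\prod_{j=1}^n c_j^{p_{ij}}=2c_i\alpha_i(d-2-2\alpha_i)$, and set $u_i(x)=c_i(|x|^{-2\alpha_i}-1)$. Then for each $i$ and each $x\in B_1\setminus\{0\}$, $-\Delta u_i(x)=\prod_{j=1}^n (u_j(x)+c_j)^{p_{ij}}$. -/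
/-!
Differentiating twice, `Δ |x|^β = β (β + d - 2) |x|^(β - 2)` away from the origin, so
`-Δ u_i = 2 c_i α_i (d - 2 - 2α_i) |x|^(-2α_i - 2)`. On the other side `u_j + c_j = c_j |x|^(-2α_j)`,
so `∏_j (u_j + c_j)^(p_ij) = (∏_j c_j^(p_ij)) |x|^(-2 ∑_j p_ij α_j)`; the equation `(I - P)α = -1`
says `∑_j p_ij α_j = α_i + 1`, and the choice of `c_i` matches the coefficients.
-/

open Metric

/-- The Laplacian of a function on `ℝ^d`: sum of second partial derivatives. -/
noncomputable def lap {d : ℕ} (f : EuclideanSpace ℝ (Fin d) → ℝ)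
    (x : EuclideanSpace ℝ (Fin d)) : ℝ :=
  ∑ i, fderiv ℝ (fun y => fderiv ℝ f y (EuclideanSpace.single i 1)) x
    (EuclideanSpace.single i 1)

section NormRpow

variable {E : Type*} [NormedAddCommGroup E] [InnerProductSpace ℝ E]

theorem hasFDerivAt_norm_rpow_of_ne_zero (β : ℝ) {x : E} (hx : x ≠ 0) :
    HasFDerivAt (fun y : E => ‖y‖ ^ β) ((β * ‖x‖ ^ (β - 2)) • innerSL ℝ x) x := by
  have hsq := (hasStrictFDerivAt_norm_sq x).hasFDerivAt.rpow_const (p := β / 2) (by simp [hx])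
  convert hsq using 1
  · ext y
    rw [← Real.rpow_natCast_mul (norm_nonneg y)]
    ring_nf
  · rw [← Real.rpow_natCast_mul (norm_nonneg x), ← Nat.cast_smul_eq_nsmul ℝ, smul_smul]
    ring_nf

end NormRpow

section EuclideanLaplacian

variable {d : ℕ}

-- Over a field, `fderiv` commutes with constant scalings and shifts even where `f` is not
-- differentiable.
theorem lap_const_mul_sub_const (a b : ℝ) (f : EuclideanSpace ℝ (Fin d) → ℝ)
    (x : EuclideanSpace ℝ (Fin d)) :
    lap (fun y => a * (f y - b)) x = a * lap f x := by
  have hfd : fderiv ℝ (fun y => a * (f y - b)) = a • fderiv ℝ f := by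
    rw [show (fun y => a * (f y - b)) = a • fun y => f y - b from rfl,
      fderiv_const_smul_field]
    exact congrArg (a • ·) (funext fun _ => fderiv_sub_const b)
  simp only [lap, hfd, Finset.mul_sum]
  refine Finset.sum_congr rfl fun i _ => ?_
  rw [show (fun y => (a • fderiv ℝ f) y (EuclideanSpace.single i 1)) =
      a • fun y => fderiv ℝ f y (EuclideanSpace.single i 1) from rfl,
    fderiv_const_smul_field]
  rfl

theorem fderiv_norm_rpow_apply_single (β : ℝ) {y : EuclideanSpace ℝ (Fin d)} (hy : y ≠ 0)
    (i : Fin d) :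
    fderiv ℝ (fun z : EuclideanSpace ℝ (Fin d) => ‖z‖ ^ β) y (EuclideanSpace.single i 1) =
      β * ‖y‖ ^ (β - 2) * y i := by
  simp [(hasFDerivAt_norm_rpow_of_ne_zero β hy).fderiv, EuclideanSpace.inner_single_right]

theorem fderiv_fderiv_norm_rpow_apply_single (β : ℝ) {x : EuclideanSpace ℝ (Fin d)}
    (hx : x ≠ 0) (i : Fin d) :
    fderiv ℝ (fun y => fderiv ℝ (fun z : EuclideanSpace ℝ (Fin d) => ‖z‖ ^ β) y
        (EuclideanSpace.single i 1)) x (EuclideanSpace.single i 1) =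
      β * ‖x‖ ^ (β - 2) + β * (β - 2) * ‖x‖ ^ (β - 4) * x i ^ 2 := by
  have hpartial : (fun y => fderiv ℝ (fun z : EuclideanSpace ℝ (Fin d) => ‖z‖ ^ β) y
      (EuclideanSpace.single i 1)) =ᶠ[nhds x] fun y => β * (‖y‖ ^ (β - 2) * y i) := by
    filter_upwards [isOpen_compl_singleton.mem_nhds hx] with y hy
    rw [fderiv_norm_rpow_apply_single β hy, mul_assoc]
  rw [hpartial.fderiv_eq,
    (((hasFDerivAt_norm_rpow_of_ne_zero (β - 2) hx).fun_mul
      (PiLp.hasFDerivAt_apply 2 x i)).const_mul β).fderiv]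
  simp [EuclideanSpace.inner_single_right]
  ring_nf

theorem lap_norm_rpow (β : ℝ) {x : EuclideanSpace ℝ (Fin d)} (hx : x ≠ 0) :
    lap (fun y => ‖y‖ ^ β) x = β * (β + d - 2) * ‖x‖ ^ (β - 2) := by
  have hnorm : ‖x‖ ^ (β - 4) * ‖x‖ ^ 2 = ‖x‖ ^ (β - 2) := by
    rw [← Real.rpow_natCast, ← Real.rpow_add (norm_pos_iff.mpr hx)]
    congr 1
    ring
  simp only [lap, fderiv_fderiv_norm_rpow_apply_single β hx, Finset.sum_add_distrib,
    Finset.sum_const, Finset.card_univ, Fintype.card_fin, nsmul_eq_mul, ← Finset.mul_sum,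
    ← EuclideanSpace.real_norm_sq_eq, mul_assoc _ (‖x‖ ^ (β - 4)), hnorm]
  ring

end EuclideanLaplacian

theorem prod_mul_rpow_rpow {ι : Type*} (s : Finset ι) {r : ℝ} (hr : 0 < r) {c : ι → ℝ}
    (hc : ∀ j ∈ s, 0 ≤ c j) (a p : ι → ℝ) :
    ∏ j ∈ s, (c j * r ^ a j) ^ p j = (∏ j ∈ s, c j ^ p j) * r ^ (∑ j ∈ s, a j * p j) := by
  rw [Real.rpow_sum_of_pos hr, ← Finset.prod_mul_distrib]
  refine Finset.prod_congr rfl fun j hj => ?_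
  rw [Real.mul_rpow (hc j hj) (by positivity), ← Real.rpow_mul hr.le]

theorem Matrix.sum_mul_eq_add_one_of_one_sub_mulVec {n : Type*} [Fintype n] [DecidableEq n]
    {P : Matrix n n ℝ} {α : n → ℝ} (h : (1 - P).mulVec α = fun _ => -1) (i : n) :
    ∑ j, P i j * α j = α i + 1 := by
  have hi := congrFun h i
  rw [Matrix.sub_mulVec, Matrix.one_mulVec, Pi.sub_apply] at hi
  simp only [Matrix.mulVec, dotProduct] at hi
  linarith

theorem stmt5_general (d n : ℕ) (P : Matrix (Fin n) (Fin n) ℝ)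
    (α : Fin n → ℝ)
    (hα : ((1 : Matrix (Fin n) (Fin n) ℝ) - P).mulVec α = fun _ => -1)
    (c : Fin n → ℝ) (hc : ∀ i, 0 < c i)
    (hceq : ∀ i, ∏ j, c j ^ (P i j) = 2 * c i * α i * ((d : ℝ) - 2 - 2 * α i))
    (u : Fin n → EuclideanSpace ℝ (Fin d) → ℝ)
    (hu : ∀ i x, u i x = c i * (‖x‖ ^ (-(2 * α i)) - 1)) :
    ∀ i, ∀ x ∈ ball (0 : EuclideanSpace ℝ (Fin d)) 1, x ≠ 0 →
      -lap (u i) x = ∏ j, (u j x + c j) ^ (P i j) := by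
  intro i x _ hx
  have hshift : ∀ j, u j x + c j = c j * ‖x‖ ^ (-(2 * α j)) := fun j => by rw [hu]; ring
  have hexp : ∑ j, -(2 * α j) * P i j = -(2 * α i) - 2 := by
    simp only [neg_mul, mul_assoc, mul_comm (α _), ← Finset.mul_sum, Finset.sum_neg_distrib,
      Matrix.sum_mul_eq_add_one_of_one_sub_mulVec hα i]
    ring
  rw [funext (hu i), lap_const_mul_sub_const, lap_norm_rpow _ hx, Finset.prod_congr rfl
    fun j _ => congrArg (· ^ P i j) (hshift j), prod_mul_rpow_rpow _ (norm_pos_iff.mpr hx)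
    (fun j _ => (hc j).le), hexp, hceq]
  ring

/-- the explicit singular radial functions
`u_i(x) = c_i(|x|^{-2α_i} - 1)` solve `-Δu_i = ∏_j (u_j + c_j)^{p_{ij}}` in the
punctured unit ball. -/
theorem stmt5 (d n : ℕ) (hd : 3 ≤ d) (P : Matrix (Fin n) (Fin n) ℝ)
    (hP : ∀ i j, 0 ≤ P i j)
    (α : Fin n → ℝ)
    (hα : ((1 : Matrix (Fin n) (Fin n) ℝ) - P).mulVec α = fun _ => -1)
    (hαpos : ∀ i, 0 < α i) (hαlt : ∀ i, α i < ((d : ℝ) - 2) / 2)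
    (c : Fin n → ℝ) (hc : ∀ i, 0 < c i)
    (hceq : ∀ i, ∏ j, c j ^ (P i j) = 2 * c i * α i * ((d : ℝ) - 2 - 2 * α i))
    (u : Fin n → EuclideanSpace ℝ (Fin d) → ℝ)
    (hu : ∀ i x, u i x = c i * (‖x‖ ^ (-(2 * α i)) - 1)) :
    ∀ i, ∀ x ∈ ball (0 : EuclideanSpace ℝ (Fin d)) 1, x ≠ 0 →
      -lap (u i) x = ∏ j, (u j x + c j) ^ (P i j) :=
  stmt5_general d n P α hα c hc hceq u hu
end

section
/- Suppose $0<k<K$, $p_{11}\in[0,1)$, and $\frac{p_{11}}{k}-\frac{1}{k}<\frac{p_{11}}{K}-\frac{1}{K}$. Define a sequence $(K^m)_{m\ge 0}$ by $K^0=k$ and $\frac{p_{11}}{K^{m-1}}-\frac{1}{K^m}=\tau^m h_0+(1-\tau^m)h_\infty$ where $h_0=\frac{p_{11}}{k}-\frac 1k$, $h_\infty=\frac{p_{11}}{K}-\frac 1K$, and $\tau\in(0,1)$. If $1/K^1>1/K$, then by induction $1/K^m>1/K$ for all $m\ge 1$; consequently $(K^m)$ is a positive, increasing sequence converging to $K$.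 -/
/-!
Write `x m = 1 / K^m - 1 / K` and `δ = 1 / k - 1 / K > 0`. The recursion is the affine relation
`x (m + 1) = p₁₁ x m + (1 - p₁₁) τ^(m+1) δ` with `x 0 = δ`, so each `x (m + 1)` is a convex
combination of `x m` and a term of the decreasing positive sequence `τ^m δ`. By induction
`τ^m δ ≤ x m`, which makes `x` positive and decreasing; its limit `L` satisfies `L = p₁₁ L`,
hence `L = 0` because `p₁₁ < 1`. Translating back gives `1 / K < 1 / K^m ↓ 1 / K`.
-/

open Filter Topology

section ConvexRecursion

variable {a : ℝ} {x b : ℕ → ℝ}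

theorem le_of_convex_rec (ha₀ : 0 ≤ a) (hb : Antitone b) (h₀ : b 0 ≤ x 0)
    (hrec : ∀ m, x (m + 1) = a * x m + (1 - a) * b (m + 1)) (m : ℕ) : b m ≤ x m := by
  induction m with
  | zero => exact h₀
  | succ m ih =>
    have : a * b (m + 1) ≤ a * x m :=
      mul_le_mul_of_nonneg_left ((hb m.le_succ).trans ih) ha₀
    linarith [hrec m]

theorem antitone_of_convex_rec (ha₀ : 0 ≤ a) (ha₁ : a ≤ 1) (hb : Antitone b) (h₀ : b 0 ≤ x 0)
    (hrec : ∀ m, x (m + 1) = a * x m + (1 - a) * b (m + 1)) : Antitone x := by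
  refine antitone_nat_of_succ_le fun m => ?_
  have hbx : b (m + 1) ≤ x m :=
    (hb m.le_succ).trans (le_of_convex_rec ha₀ hb h₀ hrec m)
  have : (1 - a) * b (m + 1) ≤ (1 - a) * x m := mul_le_mul_of_nonneg_left hbx (by linarith)
  linarith [hrec m]

theorem tendsto_zero_of_convex_rec (ha₀ : 0 ≤ a) (ha₁ : a < 1) (hb : Antitone b)
    (hb_lim : Tendsto b atTop (𝓝 0)) (h₀ : b 0 ≤ x 0)
    (hrec : ∀ m, x (m + 1) = a * x m + (1 - a) * b (m + 1)) : Tendsto x atTop (𝓝 0) := by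
  have hx_anti := antitone_of_convex_rec ha₀ ha₁.le hb h₀ hrec
  have hx_nonneg (m : ℕ) : 0 ≤ x m :=
    (hb.le_of_tendsto hb_lim m).trans (le_of_convex_rec ha₀ hb h₀ hrec m)
  obtain ⟨L, hL⟩ : ∃ L, Tendsto x atTop (𝓝 L) :=
    ⟨_, tendsto_atTop_ciInf hx_anti ⟨0, by rintro _ ⟨m, rfl⟩; exact hx_nonneg m⟩⟩
  have hshift : Tendsto (fun m => x (m + 1)) atTop (𝓝 (a * L + (1 - a) * 0)) := by
    simp_rw [hrec]
    exact (hL.const_mul a).add ((hb_lim.comp (tendsto_add_atTop_nat 1)).const_mul (1 - a))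
  have hfix : L = a * L + (1 - a) * 0 :=
    tendsto_nhds_unique ((tendsto_add_atTop_iff_nat 1).mpr hL) hshift
  have hL0 : L = 0 := by nlinarith
  exact hL0 ▸ hL

end ConvexRecursion

theorem stmt17_general (p11 k K τ : ℝ) (h110 : 0 ≤ p11) (h111 : p11 < 1)
    (hk : 0 < k) (hkK : k < K) (hτ0 : 0 < τ) (hτ1 : τ < 1)
    (Ks : ℕ → ℝ) (h0 : Ks 0 = k)
    (hrec : ∀ m : ℕ, p11 / Ks m - 1 / Ks (m + 1) =
      τ ^ (m + 1) * (p11 / k - 1 / k) + (1 - τ ^ (m + 1)) * (p11 / K - 1 / K)) :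
    (∀ m : ℕ, 1 ≤ m → 1 / K < 1 / Ks m) ∧ (∀ m, 0 < Ks m) ∧ Monotone Ks ∧
    Filter.Tendsto Ks Filter.atTop (nhds K) := by
  set δ := 1 / k - 1 / K
  have hδ : 0 < δ := sub_pos.mpr (one_div_lt_one_div_of_lt hk hkK)
  have hb : Antitone fun m => τ ^ m * δ := fun m n hmn =>
    mul_le_mul_of_nonneg_right (pow_le_pow_of_le_one hτ0.le hτ1.le hmn) hδ.le
  set x : ℕ → ℝ := fun m => 1 / Ks m - 1 / K
  have hb₀ : τ ^ 0 * δ ≤ x 0 := by simp [x, h0, δ]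
  have hxrec (m : ℕ) : x (m + 1) = p11 * x m + (1 - p11) * (τ ^ (m + 1) * δ) := by
    linear_combination (-1 : ℝ) * hrec m
  have hgap (m : ℕ) : 1 / K < 1 / Ks m := by
    have := le_of_convex_rec h110 hb hb₀ hxrec m
    linarith [mul_pos (pow_pos hτ0 m) hδ]
  have hpos (m : ℕ) : 0 < Ks m :=
    one_div_pos.mp ((one_div_pos.mpr (hk.trans hkK)).trans (hgap m))
  refine ⟨fun m _ => hgap m, hpos, fun m n hmn => ?_, ?_⟩
  · have := antitone_of_convex_rec h110 h111.le hb hb₀ hxrec hmn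
    exact le_of_one_div_le_one_div (hpos n) (by linarith)
  · have hb_lim : Tendsto (fun m => τ ^ m * δ) atTop (𝓝 0) := by
      simpa using (tendsto_pow_atTop_nhds_zero_of_lt_one hτ0.le hτ1).mul_const δ
    have hlim := tendsto_zero_of_convex_rec h110 h111 hb hb_lim hb₀ hxrec
    have := (tendsto_sub_nhds_zero_iff.mp hlim).inv₀ (one_div_pos.mpr (hk.trans hkK)).ne'
    simpa only [one_div, inv_inv] using this

/-- the iteration scheme of Lemma 2.5(1): the recursively defined
sequence `(K^m)` is positive, increasing and converges to `K`. -/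
theorem stmt17 (p11 k K τ : ℝ) (h110 : 0 ≤ p11) (h111 : p11 < 1)
    (hk : 0 < k) (hkK : k < K) (hτ0 : 0 < τ) (hτ1 : τ < 1)
    (hmono : p11 / k - 1 / k < p11 / K - 1 / K)
    (Ks : ℕ → ℝ) (h0 : Ks 0 = k)
    (hrec : ∀ m : ℕ, p11 / Ks m - 1 / Ks (m + 1) =
      τ ^ (m + 1) * (p11 / k - 1 / k) + (1 - τ ^ (m + 1)) * (p11 / K - 1 / K))
    (hbase : 1 / K < 1 / Ks 1) :
    (∀ m : ℕ, 1 ≤ m → 1 / K < 1 / Ks m) ∧ (∀ m, 0 < Ks m) ∧ Monotone Ks ∧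
    Filter.Tendsto Ks Filter.atTop (nhds K) :=
  stmt17_general p11 k K τ h110 h111 hk hkK hτ0 hτ1 Ks h0 hrec
end

section
/- Let $p_c>1$ and $p_c'=p_c/(p_c-1)$. Let $p_{ij}\ge 0$ ($1\le i,j\le 3$) satisfy $p_{11},p_{22}<1$ and $p_{12}p_{21}<(1-p_{11})(1-p_{22})$, and suppose $(k_1^*,k_2^*)$ defined by the linear system in the unknowns $x_1=1/k_1^*$, $x_2=1/k_2^*$: $p_{12}x_2+\frac{p_{13}}{p_c}-(1-p_{11})x_1=\frac{1}{p_c'}$, $p_{21}x_1+\frac{p_{23}}{p_c}-(1-p_{22})x_2=\frac{1}{p_c'}$, satisfies $x_1,x_2>0$. Then the inequality $\frac{p_{31}}{k_1^*}+\frac{p_{32}}{k_2^*}+\frac{p_{33}}{p_c}<1$ is equivalent to $\alpha_3>\frac{1}{p_c-1}$, where $\alpha=(\alpha_1,\alpha_2,\alpha_3)$ solves $(I-P)\alpha=-\mathbf 1$ and $\det(I-P)<0$. -/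
/-!
Write `M = 1 - P` and `Δ = (1 - p₁₁)(1 - p₂₂) - p₁₂p₂₁` for the determinant of its upper left
`2 × 2` block. Solving the bootstrap system for `x₁, x₂` by Cramer's rule and expanding
`det M` along its last column gives the polynomial identity
`p_c Δ (1 - S) = det M + (p_c - 1) Λ₃`, where `S = p₃₁x₁ + p₃₂x₂ + p₃₃/p_c` and `Λ₃` is the
determinant of `M` with its last column replaced by `1`. Cramer's rule for
`M α = -1` gives `Λ₃ = -α₃ det M`, so `p_c Δ (1 - S) = det M (1 - (p_c - 1) α₃)`; since
`p_c Δ > 0 > det M`, `S < 1` exactly when `(p_c - 1) α₃ > 1`.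
-/

open Matrix

theorem Matrix.cramer_mulVec {n R : Type*} [Fintype n] [DecidableEq n] [CommRing R]
    (A : Matrix n n R) (v : n → R) : A.cramer (A *ᵥ v) = A.det • v := by
  rw [cramer_eq_adjugate_mulVec, mulVec_mulVec, adjugate_mul, smul_mulVec, one_mulVec]

theorem Matrix.det_mul_apply_of_mulVec_eq_neg_one {n R : Type*} [Fintype n] [DecidableEq n]
    [CommRing R] {A : Matrix n n R} {v : n → R} (h : A *ᵥ v = fun _ => -1) (i : n) :
    A.det * v i = -(A.updateCol i 1).det := by
  have hneg : (fun _ => -1 : n → R) = (-1 : R) • 1 := by ext; simp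
  have hcramer := congrFun (A.cramer_mulVec v) i
  rw [h, cramer_apply, hneg, det_updateCol_smul, Pi.smul_apply, smul_eq_mul] at hcramer
  rw [← hcramer, neg_one_mul]

theorem det_one_sub_fin_three_bootstrap_identity {K : Type*} [Field K]
    {p11 p12 p13 p21 p22 p23 p31 p32 p33 c x1 x2 : K} (hc : c ≠ 0)
    (h1 : p12 * x2 + p13 / c - (1 - p11) * x1 = (c - 1) / c)
    (h2 : p21 * x1 + p23 / c - (1 - p22) * x2 = (c - 1) / c) :
    let M : Matrix (Fin 3) (Fin 3) K := 1 - of ![![p11, p12, p13], ![p21, p22, p23], ![p31, p32, p33]]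
    c * ((1 - p11) * (1 - p22) - p12 * p21) * (1 - (p31 * x1 + p32 * x2 + p33 / c))
      = M.det + (c - 1) * (M.updateCol 2 1).det := by
  simp only [det_fin_three, Matrix.sub_apply, one_apply_eq, of_apply, cons_val', cons_val_zero,
    cons_val_fin_one, cons_val_one, cons_val, ne_eq, Fin.reduceEq, not_false_eq_true, one_apply_ne,
    updateCol_ne, updateCol_self, Pi.one_apply]
  field_simp at h1 h2 ⊢
  linear_combination (p31 * (1 - p22) + p32 * p21) * h1 + (p31 * p12 + p32 * (1 - p11)) * h2

theorem stmt18_general (pc pc' p11 p12 p13 p21 p22 p23 p31 p32 p33 x1 x2 : ℝ)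
    (hpc : 1 < pc) (hpc' : pc' = pc / (pc - 1))
    (hdd : p12 * p21 < (1 - p11) * (1 - p22))
    (he1 : p12 * x2 + p13 / pc - (1 - p11) * x1 = 1 / pc')
    (he2 : p21 * x1 + p23 / pc - (1 - p22) * x2 = 1 / pc')
    (α : Fin 3 → ℝ)
    (hα : ((1 : Matrix (Fin 3) (Fin 3) ℝ) -
        Matrix.of ![![p11, p12, p13], ![p21, p22, p23], ![p31, p32, p33]]).mulVec α
      = fun _ => -1)
    (hdet : ((1 : Matrix (Fin 3) (Fin 3) ℝ) -
        Matrix.of ![![p11, p12, p13], ![p21, p22, p23], ![p31, p32, p33]]).det < 0) :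
    p31 * x1 + p32 * x2 + p33 / pc < 1 ↔ 1 / (pc - 1) < α 2 := by
  rw [hpc', one_div_div] at he1 he2
  have hscale : 0 < pc * ((1 - p11) * (1 - p22) - p12 * p21) :=
    mul_pos (by linarith) (sub_pos.2 hdd)
  have key : pc * ((1 - p11) * (1 - p22) - p12 * p21) * (1 - (p31 * x1 + p32 * x2 + p33 / pc))
      = -((1 : Matrix (Fin 3) (Fin 3) ℝ) -
        of ![![p11, p12, p13], ![p21, p22, p23], ![p31, p32, p33]]).det * ((pc - 1) * α 2 - 1) := by
    linear_combination det_one_sub_fin_three_bootstrap_identity (by linarith : (0 : ℝ) < pc).ne' he1 he2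
      + (pc - 1) * det_mul_apply_of_mulVec_eq_neg_one hα 2
  calc p31 * x1 + p32 * x2 + p33 / pc < 1
      ↔ 0 < pc * ((1 - p11) * (1 - p22) - p12 * p21) * (1 - (p31 * x1 + p32 * x2 + p33 / pc)) := by
        rw [mul_pos_iff_of_pos_left hscale, sub_pos]
    _ ↔ 0 < (pc - 1) * α 2 - 1 := by rw [key, mul_pos_iff_of_pos_left (neg_pos.2 hdet)]
    _ ↔ 1 / (pc - 1) < α 2 := by rw [sub_pos, div_lt_iff₀' (sub_pos.2 hpc)]

/-- equivalence (3.20) in Case III of the proof of Theorem 2.4 for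
`n = 3`: with `x1 = 1/k₁*`, `x2 = 1/k₂*` solving the bootstrap linear system, the
inequality `p₃₁/k₁* + p₃₂/k₂* + p₃₃/p_c < 1` is equivalent to `α₃ > 1/(p_c-1)`. -/
theorem stmt18 (pc pc' p11 p12 p13 p21 p22 p23 p31 p32 p33 x1 x2 : ℝ)
    (hpc : 1 < pc) (hpc' : pc' = pc / (pc - 1))
    (h11n : 0 ≤ p11) (h12n : 0 ≤ p12) (h13n : 0 ≤ p13)
    (h21n : 0 ≤ p21) (h22n : 0 ≤ p22) (h23n : 0 ≤ p23)
    (h31n : 0 ≤ p31) (h32n : 0 ≤ p32) (h33n : 0 ≤ p33)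
    (h11 : p11 < 1) (h22 : p22 < 1)
    (hdd : p12 * p21 < (1 - p11) * (1 - p22))
    (he1 : p12 * x2 + p13 / pc - (1 - p11) * x1 = 1 / pc')
    (he2 : p21 * x1 + p23 / pc - (1 - p22) * x2 = 1 / pc')
    (hx1 : 0 < x1) (hx2 : 0 < x2)
    (α : Fin 3 → ℝ)
    (hα : ((1 : Matrix (Fin 3) (Fin 3) ℝ) -
        Matrix.of ![![p11, p12, p13], ![p21, p22, p23], ![p31, p32, p33]]).mulVec α
      = fun _ => -1)
    (hdet : ((1 : Matrix (Fin 3) (Fin 3) ℝ) -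
        Matrix.of ![![p11, p12, p13], ![p21, p22, p23], ![p31, p32, p33]]).det < 0) :
    p31 * x1 + p32 * x2 + p33 / pc < 1 ↔ 1 / (pc - 1) < α 2 :=
  stmt18_general pc pc' p11 p12 p13 p21 p22 p23 p31 p32 p33 x1 x2 hpc hpc' hdd he1 he2 α hα hdet
end

section
/- Let $\Omega\subset\mathbb{R}^d$ be a smooth bounded domain and $\lambda>\lambda_1$, the first Dirichlet eigenvalue of $-\Delta$ on $\Omega$, with positive eigenfunction $\varphi_1$. Suppose nonnegative $u_1,\dots,u_n\in L^1(\Omega)$ are $L^1_\delta$-solutions of $-\Delta u_i=f_i$ with $\sum_{i=1}^n f_i\ge\lambda\sum_{i=1}^n u_i - C_1$ for a constant $C_1>0$. Then $\sum_{i=1}^n\int_\Omega u_i\varphi_1 \le \frac{C_1}{\lambda-\lambda_1}\int_\Omega\varphi_1$; in particular $\sum_{i=1}^n\|u_i\|_{L^1_\delta}\le M$ with $M$ independent of the solution. -/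
open MeasureTheory

/-- The distance to the boundary of `Ω`. -/
noncomputable def dlt {d : ℕ} (Ω : Set (EuclideanSpace ℝ (Fin d)))
    (x : EuclideanSpace ℝ (Fin d)) : ℝ :=
  Metric.infDist x (frontier Ω)

/-- `u` is an `L¹_δ`-solution of `-Δu = f` on `Ω`. -/
def IsL1DeltaSol {d : ℕ} (Ω : Set (EuclideanSpace ℝ (Fin d)))
    (u f : EuclideanSpace ℝ (Fin d) → ℝ) : Prop :=
  IntegrableOn u Ω ∧ IntegrableOn (fun x => f x * dlt Ω x) Ω ∧
  ∀ φ : EuclideanSpace ℝ (Fin d) → ℝ, ContDiffOn ℝ 2 φ (closure Ω) →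
    (∀ x ∈ frontier Ω, φ x = 0) →
    -∫ x in Ω, u x * lap φ x = ∫ x in Ω, f x * φ x

/-!
Testing the equation for `u_i` against the first eigenfunction gives
`λ₁ ∫ u_i φ₁ = ∫ f_i φ₁`. Integrating the superlinearity condition against `φ₁ ≥ 0` then yields
`λ ∑ ∫ u_i φ₁ - C₁ ∫ φ₁ ≤ λ₁ ∑ ∫ u_i φ₁`, which is the first bound since `λ > λ₁`; the second
follows from `c₁ δ ≤ φ₁` and `u_i ≥ 0`.
-/

theorem MeasureTheory.Integrable.mul_of_abs_le_mul {α : Type*} [MeasurableSpace α]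
    {μ : Measure α} {g w φ : α → ℝ} {c : ℝ} (hgw : Integrable (fun x => g x * w x) μ)
    (hφ : AEStronglyMeasurable φ μ) (hw : AEStronglyMeasurable w μ)
    (hb : ∀ᵐ x ∂μ, |φ x| ≤ c * |w x|) :
    Integrable (fun x => g x * φ x) μ := by
  -- `g φ = (g w) (φ / w)` also where `w` vanishes, since `φ` vanishes there too
  have hratio : ∀ᵐ x ∂μ, ‖φ x / w x‖ ≤ |c| := by
    filter_upwards [hb] with x hx
    rw [Real.norm_eq_abs, abs_div]
    rcases (abs_nonneg (w x)).eq_or_lt with h | h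
    · simp [← h]
    · rw [div_le_iff₀ h]
      exact hx.trans (mul_le_mul_of_nonneg_right (le_abs_self c) h.le)
  refine (hgw.mul_bdd (hφ.aemeasurable.div hw.aemeasurable).aestronglyMeasurable hratio).congr ?_
  filter_upwards [hb] with x hx
  rcases eq_or_ne (w x) 0 with h | h
  · have : φ x = 0 := abs_eq_zero.mp (le_antisymm (by simpa [h] using hx) (abs_nonneg _))
    simp [h, this]
  · rw [Pi.div_apply]
    field_simp

theorem continuous_dlt {d : ℕ} (Ω : Set (EuclideanSpace ℝ (Fin d))) : Continuous (dlt Ω) :=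
  Metric.continuous_infDist_pt _

namespace IsL1DeltaSol

variable {d : ℕ} {Ω : Set (EuclideanSpace ℝ (Fin d))} {u f ψ : EuclideanSpace ℝ (Fin d) → ℝ}

theorem integrableOn_mul_of_continuousOn (hsol : IsL1DeltaSol Ω u f) (hΩ : MeasurableSet Ω)
    (hΩb : Bornology.IsBounded Ω) (hψ : ContinuousOn ψ (closure Ω)) :
    IntegrableOn (fun x => u x * ψ x) Ω :=
  hsol.1.mul_continuousOn_of_subset hψ hΩ hΩb.isCompact_closure subset_closure

theorem integrableOn_source_mul_of_abs_le (hsol : IsL1DeltaSol Ω u f) (hΩ : MeasurableSet Ω)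
    (hψ : ContinuousOn ψ Ω) {c : ℝ} (hψδ : ∀ x ∈ Ω, |ψ x| ≤ c * dlt Ω x) :
    IntegrableOn (fun x => f x * ψ x) Ω :=
  hsol.2.1.mul_of_abs_le_mul (hψ.aestronglyMeasurable hΩ)
    (continuous_dlt Ω).aestronglyMeasurable <|
      ae_restrict_of_forall_mem hΩ fun x hx => by
        rw [dlt, abs_of_nonneg Metric.infDist_nonneg]
        exact hψδ x hx

theorem eigenvalue_mul_integral_mul_eigenfunction {lam : ℝ}
    (hsol : IsL1DeltaSol Ω u f) (hΩ : MeasurableSet Ω) (hreg : ContDiffOn ℝ 2 ψ (closure Ω))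
    (hbd : ∀ x ∈ frontier Ω, ψ x = 0) (heig : ∀ x ∈ Ω, -lap ψ x = lam * ψ x) :
    lam * ∫ x in Ω, u x * ψ x = ∫ x in Ω, f x * ψ x := by
  rw [← hsol.2.2 ψ hreg hbd, ← integral_const_mul, ← integral_neg]
  refine setIntegral_congr_fun hΩ fun x hx => ?_
  linear_combination -u x * heig x hx

end IsL1DeltaSol

theorem const_mul_setIntegral_mul_le {α : Type*} [MeasurableSpace α] {μ : Measure α}
    {s : Set α} {u w φ : α → ℝ} {c : ℝ} (hs : MeasurableSet s)
    (huw : IntegrableOn (fun x => u x * w x) s μ) (huφ : IntegrableOn (fun x => u x * φ x) s μ)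
    (hu : ∀ x ∈ s, 0 ≤ u x) (hwφ : ∀ x ∈ s, c * w x ≤ φ x) :
    c * ∫ x in s, u x * w x ∂μ ≤ ∫ x in s, u x * φ x ∂μ := by
  rw [← integral_const_mul]
  refine setIntegral_mono_on (huw.const_mul c) huφ hs fun x hx => ?_
  rw [mul_left_comm]
  exact mul_le_mul_of_nonneg_left (hwφ x hx) (hu x hx)

theorem sub_le_sum_setIntegral_mul_of_le {ι α : Type*} [MeasurableSpace α] {μ : Measure α}
    {s : Set α} (t : Finset ι) {u f : ι → α → ℝ} {φ : α → ℝ} {lam C : ℝ} (hs : MeasurableSet s)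
    (huφ : ∀ i ∈ t, IntegrableOn (fun x => u i x * φ x) s μ)
    (hfφ : ∀ i ∈ t, IntegrableOn (fun x => f i x * φ x) s μ) (hφ : IntegrableOn φ s μ)
    (hφ0 : ∀ x ∈ s, 0 ≤ φ x) (hsup : ∀ x ∈ s, lam * ∑ i ∈ t, u i x - C ≤ ∑ i ∈ t, f i x) :
    lam * ∑ i ∈ t, ∫ x in s, u i x * φ x ∂μ - C * ∫ x in s, φ x ∂μ ≤
      ∑ i ∈ t, ∫ x in s, f i x * φ x ∂μ := by
  have hlhs : ∫ x in s, (lam * ∑ i ∈ t, u i x * φ x - C * φ x) ∂μ =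
      lam * ∑ i ∈ t, ∫ x in s, u i x * φ x ∂μ - C * ∫ x in s, φ x ∂μ := by
    rw [integral_sub ((integrable_finsetSum t huφ).const_mul lam) (hφ.const_mul C),
      integral_const_mul, integral_const_mul, integral_finsetSum t huφ]
  rw [← hlhs, ← integral_finsetSum t hfφ]
  refine setIntegral_mono_on (((integrable_finsetSum t huφ).const_mul lam).sub (hφ.const_mul C))
    (integrable_finsetSum t hfφ) hs fun x hx => ?_
  simp only [← Finset.sum_mul, ← mul_assoc, ← sub_mul]
  exact mul_le_mul_of_nonneg_right (hsup x hx) (hφ0 x hx)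

theorem stmt19_general (d n : ℕ) (Ω : Set (EuclideanSpace ℝ (Fin d)))
    (hΩo : IsOpen Ω) (hΩb : Bornology.IsBounded Ω)
    (φ₁ : EuclideanSpace ℝ (Fin d) → ℝ) (lam1 lam C1 c1 c2 : ℝ)
    (hlam : lam1 < lam)
    (hc1 : 0 < c1)
    (hφreg : ContDiffOn ℝ 2 φ₁ (closure Ω)) (hφbd : ∀ x ∈ frontier Ω, φ₁ x = 0)
    (hφpos : ∀ x ∈ Ω, 0 < φ₁ x)
    (hφeig : ∀ x ∈ Ω, -lap φ₁ x = lam1 * φ₁ x)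
    (hφδ : ∀ x ∈ Ω, c1 * dlt Ω x ≤ φ₁ x ∧ φ₁ x ≤ c2 * dlt Ω x)
    (u f : Fin n → EuclideanSpace ℝ (Fin d) → ℝ)
    (hu0 : ∀ i, ∀ x ∈ Ω, 0 ≤ u i x)
    (hsol : ∀ i, IsL1DeltaSol Ω (u i) (f i))
    (hsup : ∀ x ∈ Ω, lam * ∑ i, u i x - C1 ≤ ∑ i, f i x) :
    ∑ i, ∫ x in Ω, u i x * φ₁ x ≤ C1 / (lam - lam1) * ∫ x in Ω, φ₁ x ∧
    ∑ i, ∫ x in Ω, u i x * dlt Ω x ≤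
      C1 / ((lam - lam1) * c1) * ∫ x in Ω, φ₁ x := by
  have hΩm : MeasurableSet Ω := hΩo.measurableSet
  have hφc : ContinuousOn φ₁ (closure Ω) := hφreg.continuousOn
  have huφ : ∀ i, IntegrableOn (fun x => u i x * φ₁ x) Ω := fun i =>
    (hsol i).integrableOn_mul_of_continuousOn hΩm hΩb hφc
  have hfφ : ∀ i, IntegrableOn (fun x => f i x * φ₁ x) Ω := fun i =>
    (hsol i).integrableOn_source_mul_of_abs_le hΩm (hφc.mono subset_closure) fun x hx =>
      (abs_of_pos (hφpos x hx)).trans_le (hφδ x hx).2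
  have htest : lam1 * ∑ i, ∫ x in Ω, u i x * φ₁ x = ∑ i, ∫ x in Ω, f i x * φ₁ x := by
    rw [Finset.mul_sum]
    exact Finset.sum_congr rfl fun i _ =>
      (hsol i).eigenvalue_mul_integral_mul_eigenfunction hΩm hφreg hφbd hφeig
  have hbound : (lam - lam1) * ∑ i, ∫ x in Ω, u i x * φ₁ x ≤ C1 * ∫ x in Ω, φ₁ x := by
    have := sub_le_sum_setIntegral_mul_of_le Finset.univ hΩm (fun i _ => huφ i)
      (fun i _ => hfφ i) ((hφc.integrableOn_compact hΩb.isCompact_closure).mono_set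
        subset_closure) (fun x hx => (hφpos x hx).le) hsup
    linarith
  have hfirst := (le_div_iff₀' (sub_pos.2 hlam)).2 hbound
  rw [← div_mul_eq_mul_div] at hfirst
  refine ⟨hfirst, ?_⟩
  calc ∑ i, ∫ x in Ω, u i x * dlt Ω x ≤ (∑ i, ∫ x in Ω, u i x * φ₁ x) / c1 := by
        rw [le_div_iff₀' hc1, Finset.mul_sum]
        refine Finset.sum_le_sum fun i _ => const_mul_setIntegral_mul_le hΩm
          ((hsol i).integrableOn_mul_of_continuousOn hΩm hΩb (continuous_dlt Ω).continuousOn)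
          (huφ i) (hu0 i) fun x hx => (hφδ x hx).1
    _ ≤ (C1 / (lam - lam1) * ∫ x in Ω, φ₁ x) / c1 := by gcongr
    _ = C1 / ((lam - lam1) * c1) * ∫ x in Ω, φ₁ x := by rw [mul_div_right_comm, div_div]

/-- Proposition 5.1: the uniform `L¹_δ` bound under the
superlinearity condition `∑ f_i ≥ λ ∑ u_i - C₁` with `λ > λ₁`. -/
theorem stmt19 (d n : ℕ) (Ω : Set (EuclideanSpace ℝ (Fin d)))
    (hΩo : IsOpen Ω) (hΩb : Bornology.IsBounded Ω) (hΩne : Ω.Nonempty)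
    (φ₁ : EuclideanSpace ℝ (Fin d) → ℝ) (lam1 lam C1 c1 c2 : ℝ)
    (hlam1 : 0 < lam1) (hlam : lam1 < lam) (hC1 : 0 < C1)
    (hc1 : 0 < c1) (hc2 : 0 < c2)
    (hφreg : ContDiffOn ℝ 2 φ₁ (closure Ω)) (hφbd : ∀ x ∈ frontier Ω, φ₁ x = 0)
    (hφpos : ∀ x ∈ Ω, 0 < φ₁ x)
    (hφeig : ∀ x ∈ Ω, -lap φ₁ x = lam1 * φ₁ x)
    (hφδ : ∀ x ∈ Ω, c1 * dlt Ω x ≤ φ₁ x ∧ φ₁ x ≤ c2 * dlt Ω x)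
    (u f : Fin n → EuclideanSpace ℝ (Fin d) → ℝ)
    (hu0 : ∀ i, ∀ x ∈ Ω, 0 ≤ u i x)
    (hsol : ∀ i, IsL1DeltaSol Ω (u i) (f i))
    (hsup : ∀ x ∈ Ω, lam * ∑ i, u i x - C1 ≤ ∑ i, f i x) :
    ∑ i, ∫ x in Ω, u i x * φ₁ x ≤ C1 / (lam - lam1) * ∫ x in Ω, φ₁ x ∧
    ∑ i, ∫ x in Ω, u i x * dlt Ω x ≤
      C1 / ((lam - lam1) * c1) * ∫ x in Ω, φ₁ x :=
  stmt19_general d n Ω hΩo hΩb φ₁ lam1 lam C1 c1 c2 hlam hc1 hφreg hφbd hφpos hφeig hφδ u f hu0 hsol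
    hsup
end
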